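/- One-variable Jacobi residue formula: let f(x) ∈ ℂ((x)) be a nonzero Laurent series and b the integer such that f(x)/x^b is a power series with nonzero constant term. Then for any Laurent polynomial G(y), CT_x [G(f(x)) · (x/f(x)) · f'(x)] = b · CT_y G(y). -/

import Mathlib

/-!
Expanding `G`, the left side is `∑ₖ cₖ Res (f ^ (k - 1) f')`, where `Res` is the coefficient
of `x⁻¹`. For `k ≠ 0` the series `f ^ (k - 1) f' = (f ^ k)' / k` is a derivative, so it has no
residue. For `k = 0`, write `f = x ^ b u` with `u` a power series with nonzero constant term;
then `f' / f = b x⁻¹ + u' / u` and `u' / u` is again a power series, so the residue is `b`.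
-/

/-- The auxiliary Laurent series whose `n`-th coefficient is `n · f_n`. -/
noncomputable def xMulDerivAux (f : LaurentSeries ℂ) : LaurentSeries ℂ :=
  ⟨fun n => (n : ℂ) * f.coeff n,
   f.isPWO_support'.mono (by
     intro n hn
     simp only [Function.mem_support] at hn ⊢
     intro h
     exact hn (by rw [h, mul_zero]))⟩

/-- The formal derivative on Laurent series: `(∑ aₙ xⁿ)' = ∑ n aₙ xⁿ⁻¹`. -/
noncomputable def xderiv (f : LaurentSeries ℂ) : LaurentSeries ℂ :=
  HahnSeries.single (-1 : ℤ) (1 : ℂ) * xMulDerivAux f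

open HahnSeries
open scoped LaurentSeries PowerSeries

theorem coeff_xMulDerivAux (f : ℂ⸨X⸩) (n : ℤ) :
    (xMulDerivAux f).coeff n = n * f.coeff n :=
  rfl

theorem support_xMulDerivAux_subset (f : ℂ⸨X⸩) : (xMulDerivAux f).support ⊆ f.support := by
  intro n hn
  simp only [mem_support, coeff_xMulDerivAux] at *
  exact right_ne_zero_of_mul hn

theorem xMulDerivAux_mul (f g : ℂ⸨X⸩) :
    xMulDerivAux (f * g) = xMulDerivAux f * g + f * xMulDerivAux g := by
  ext n
  rw [coeff_add, coeff_xMulDerivAux,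
    coeff_mul_left' f.isPWO_support (support_xMulDerivAux_subset f),
    coeff_mul_right' g.isPWO_support (support_xMulDerivAux_subset g),
    coeff_mul, Finset.mul_sum, ← Finset.sum_add_distrib]
  refine Finset.sum_congr rfl fun ij hij => ?_
  rw [← (Finset.mem_antidiagonal.mp hij).2.2, coeff_xMulDerivAux, coeff_xMulDerivAux]
  push_cast
  ring

theorem coeff_xderiv (f : ℂ⸨X⸩) (n : ℤ) :
    (xderiv f).coeff n = (n + 1 : ℤ) * f.coeff (n + 1) := by
  simpa [xderiv, coeff_xMulDerivAux] using
    coeff_single_mul_add (r := (1 : ℂ)) (x := xMulDerivAux f) (a := n + 1) (b := -1)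

theorem xderiv_mul (f g : ℂ⸨X⸩) : xderiv (f * g) = xderiv f * g + f * xderiv g := by
  simp only [xderiv, xMulDerivAux_mul]
  ring

noncomputable def xderivDerivation : Derivation ℂ ℂ⸨X⸩ ℂ⸨X⸩ where
  toFun := xderiv
  map_add' f g := by ext n; simp [coeff_xderiv, mul_add]
  map_smul' a f := by
    -- the algebra action of `ℂ` goes through `ℂ⟦X⟧`, not defeq to the coefficientwise one
    ext n
    simp only [Algebra.smul_def, RingHom.algebraMap_toAlgebra, PowerSeries.algebraMap_eq,
      RingHom.comp_apply, ofPowerSeries_C, C_mul_eq_smul, coeff_xderiv, coeff_smul,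
      RingHom.id_apply]
    ring
  map_one_eq_zero' := by
    ext n
    by_cases h : n + 1 = 0 <;> simp [coeff_xderiv, coeff_one, h]
  leibniz' f g := by
    change xderiv (f * g) = f • xderiv g + g • xderiv f
    rw [xderiv_mul, smul_eq_mul, smul_eq_mul]
    ring

theorem xderivDerivation_apply (f : ℂ⸨X⸩) : xderivDerivation f = xderiv f :=
  rfl

theorem coeff_xderiv_neg_one (f : ℂ⸨X⸩) : (xderiv f).coeff (-1) = 0 := by
  simp [coeff_xderiv]

theorem xderiv_single (b : ℤ) : xderiv (single b (1 : ℂ)) = single (b - 1) (b : ℂ) := by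
  ext n
  rw [coeff_xderiv, coeff_single, coeff_single]
  by_cases h : n = b - 1
  · simp [h]
  · simp [h, show n + 1 ≠ b by omega]

theorem xderiv_coe (p : ℂ⟦X⟧) : xderiv (p : ℂ⸨X⸩) = (d⁄dX ℂ p : ℂ⸨X⸩) := by
  ext n
  rw [coeff_xderiv]
  rcases n with m | (_ | m)
  · have h := LaurentSeries.coeff_coe_powerSeries p (m + 1)
    push_cast at h
    rw [Int.ofNat_eq_natCast, h, LaurentSeries.coeff_coe_powerSeries,
      PowerSeries.coeff_derivative]
    push_cast
    ring
  · simp [PowerSeries.coeff_coe]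
  · rw [PowerSeries.coeff_coe, PowerSeries.coeff_coe, if_pos (Int.negSucc_lt_zero _),
      if_pos (by omega), mul_zero]

theorem LaurentSeries.constantCoeff_powerSeriesPart_ne_zero {R : Type*} [Semiring R]
    {f : R⸨X⸩} (hf : f ≠ 0) : PowerSeries.constantCoeff f.powerSeriesPart ≠ 0 := by
  simpa [← PowerSeries.coeff_zero_eq_constantCoeff_apply] using mt coeff_order_eq_zero.mp hf

theorem PowerSeries.coe_inv_of_constantCoeff_ne_zero {K : Type*} [Field K] {p : K⟦X⟧}
    (hp : constantCoeff p ≠ 0) : ((p⁻¹ : K⟦X⟧) : K⸨X⸩) = (p : K⸨X⸩)⁻¹ :=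
  (inv_eq_of_mul_eq_one_right <| by rw [← coe_mul, PowerSeries.mul_inv_cancel p hp, coe_one]).symm

theorem inv_mul_xderiv_eq {f : ℂ⸨X⸩} (hf : f ≠ 0) :
    f⁻¹ * xderiv f = single (-1) (f.order : ℂ) +
      ((f.powerSeriesPart⁻¹ * d⁄dX ℂ f.powerSeriesPart : ℂ⟦X⟧) : ℂ⸨X⸩) := by
  have hp := LaurentSeries.constantCoeff_powerSeriesPart_ne_zero hf
  have hp0 : (f.powerSeriesPart : ℂ⸨X⸩) ≠ 0 :=
    (map_ne_zero_iff _ ofPowerSeries_injective).mpr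
      ((LaurentSeries.powerSeriesPart_eq_zero f).not.mpr hf)
  conv_lhs => rw [← f.single_order_mul_powerSeriesPart]
  rw [xderiv_mul, xderiv_single, xderiv_coe, PowerSeries.coe_mul,
    PowerSeries.coe_inv_of_constantCoeff_ne_zero hp]
  have hx : (single f.order (1 : ℂ))⁻¹ * single (f.order - 1) (f.order : ℂ) =
      single (-1) (f.order : ℂ) := by
    rw [inv_single, single_mul_single, inv_one, one_mul, show -f.order + (f.order - 1) = -1 by ring]
  rw [← hx]
  field_simp

theorem coeff_inv_mul_xderiv_neg_one {f : ℂ⸨X⸩} (hf : f ≠ 0) :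
    (f⁻¹ * xderiv f).coeff (-1) = f.order := by
  rw [inv_mul_xderiv_eq hf, coeff_add, coeff_single_same, PowerSeries.coeff_coe,
    if_pos (by norm_num), add_zero]

theorem coeff_zpow_sub_one_mul_xderiv_neg_one {f : ℂ⸨X⸩} {k : ℤ} (hk : k ≠ 0) :
    (f ^ (k - 1) * xderiv f).coeff (-1) = 0 := by
  have h := congrArg (coeff · (-1)) (xderivDerivation.leibniz_zpow f k)
  rw [xderivDerivation_apply, coeff_xderiv_neg_one, smul_eq_mul, ← Int.cast_smul_eq_zsmul ℂ,
    coeff_smul, smul_eq_mul, xderivDerivation_apply] at h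
  exact (mul_eq_zero.mp h.symm).resolve_left (Int.cast_ne_zero.mpr hk)

/-- One-variable Jacobi residue formula: for a nonzero Laurent series `f` with
order `b` and a Laurent polynomial `G(y) = ∑ₖ cₖ yᵏ`,
`CT_x [G(f(x)) · (x/f(x)) · f'(x)] = b · CT_y G(y) = b · c₀`. -/
theorem stmt13 (f : LaurentSeries ℂ) (hf : f ≠ 0) (c : ℤ →₀ ℂ) :
    ((∑ k ∈ c.support, c k • f ^ k) *
        ((HahnSeries.single (1 : ℤ) (1 : ℂ)) * f⁻¹) * xderiv f).coeff 0 =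
      (f.order : ℂ) * c 0 := by
  have hsum : (∑ k ∈ c.support, c k • f ^ k) * (single 1 1 * f⁻¹) * xderiv f =
      single 1 1 * ∑ k ∈ c.support, c k • (f ^ (k - 1) * xderiv f) := by
    rw [Finset.sum_mul, Finset.sum_mul, Finset.mul_sum]
    refine Finset.sum_congr rfl fun k _ => ?_
    simp only [← C_mul_eq_smul, zpow_sub_one₀ hf]
    ring
  calc _ = (∑ k ∈ c.support, c k • (f ^ (k - 1) * xderiv f)).coeff (-1) := by
        rw [hsum]
        exact (coeff_single_mul_add (r := (1 : ℂ)) (a := -1) (b := 1)).trans (one_mul _)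
    _ = c 0 • (f ^ ((0 : ℤ) - 1) * xderiv f).coeff (-1) := by
        rw [coeff_sum, Finset.sum_eq_single 0]
        · rfl
        · intro k _ hk
          rw [coeff_smul, coeff_zpow_sub_one_mul_xderiv_neg_one hk, smul_zero]
        · intro h0
          rw [coeff_smul, Finsupp.notMem_support_iff.mp h0, zero_smul]
    _ = (f.order : ℂ) * c 0 := by
        rw [zero_sub, zpow_neg_one, coeff_inv_mul_xderiv_neg_one hf, smul_eq_mul, mul_comm]
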